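/- Under restriction A1, the eigenvalues of (I_p - M_d)⁻¹ are d+1 with multiplicity r and 1 + Σ_{j=1}^d c^{2j} with multiplicity p - r. -/

import Mathlib

open Matrix Polynomial

/-- The recursively defined matrices `M_ℓ = W_ℓ (I + W_ℓᵀ W_ℓ - M_{ℓ-1})⁻¹ W_ℓᵀ`, `M₀ = 0`. -/
noncomputable def MrecGen {ι : Type*} [Fintype ι] [DecidableEq ι]
    (W : ℕ → Matrix ι ι ℝ) : ℕ → Matrix ι ι ℝ
  | 0 => 0
  | (k + 1) => W (k + 1) * (1 + (W (k + 1))ᵀ * W (k + 1) - MrecGen W k)⁻¹ * (W (k + 1))ᵀ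

/-!
If every `W_ℓ` is normal with the same Gram matrix `T = W_ℓ W_ℓᵀ = W_ℓᵀ W_ℓ`, then all the
matrices involved are polynomials in `T` or commute with it, and the recursion for
`E_ℓ = (I - M_ℓ)⁻¹` collapses to `E_ℓ = I + T E_{ℓ-1}`, so `E_d = ∑_{j ≤ d} T^j`.
Under restriction A1, `T = diag(I_r, c² I_{p-r})`, whence the two eigenvalues
`∑_{j ≤ d} 1 = d + 1` and `∑_{j ≤ d} c^{2j}`.
-/

open Finset

lemma sum_range_succ_eq_add_sum_Icc {M : Type*} [AddCommMonoid M] (f : ℕ → M) (n : ℕ) :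
    ∑ i ∈ range (n + 1), f i = f 0 + ∑ i ∈ Icc 1 n, f i := by
  rw [sum_range_succ', add_comm, ← Ico_add_one_right_eq_Icc, sum_Ico_eq_sum_range]
  simp [add_comm]

namespace Matrix

variable {ι α : Type*} [Fintype ι]

lemma commute_of_mul_transpose_eq [Semiring α] {W T : Matrix ι ι α} (hWWt : W * Wᵀ = T)
    (hWtW : Wᵀ * W = T) : Commute W T :=
  calc W * T = W * Wᵀ * W := by rw [Matrix.mul_assoc, hWtW]
    _ = T * W := by rw [hWWt]

variable [DecidableEq ι]

lemma geom_sum_diagonal [Semiring α] (v : ι → α) (n : ℕ) :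
    ∑ j ∈ range n, diagonal v ^ j = diagonal fun i ↦ ∑ j ∈ range n, v i ^ j := by
  simp only [diagonal_pow]
  ext i k
  simp [sum_apply, diagonal_apply]

lemma isUnit_det_geom_sum_diagonal [Field α] [LinearOrder α] [IsStrictOrderedRing α]
    {v : ι → α} (hv : 0 ≤ v) (n : ℕ) :
    IsUnit (∑ j ∈ range (n + 1), diagonal v ^ j).det := by
  rw [geom_sum_diagonal, det_diagonal, isUnit_iff_ne_zero]
  exact prod_ne_zero_iff.2 fun i _ ↦ (geom_sum_pos (hv i) n.succ_ne_zero).ne'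

lemma commute_nonsing_inv_right [CommRing α] {A B : Matrix ι ι α} (h : Commute A B) :
    Commute A B⁻¹ := by
  rw [nonsing_inv_eq_ringInverse]
  by_cases hB : IsUnit B
  · obtain ⟨u, rfl⟩ := hB
    rw [Ring.inverse_unit]
    exact h.units_inv_right
  · rw [Ring.inverse_non_unit _ hB]
    exact Commute.zero_right A

end Matrix

section Recursion

variable {ι : Type*} [Fintype ι] [DecidableEq ι]

lemma one_sub_mul_inv_mul_transpose {α : Type*} [CommRing α] {W T E : Matrix ι ι α}
    (hWWt : W * Wᵀ = T) (hWtW : Wᵀ * W = T) (hWE : Commute W E) (hTE : Commute T E)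
    (hE : IsUnit E.det) (hF : IsUnit (T * E + 1).det) :
    1 - W * (1 + Wᵀ * W - (1 - E⁻¹))⁻¹ * Wᵀ = (T * E + 1)⁻¹ := by
  have hWF : Commute W (T * E + 1) :=
    ((commute_of_mul_transpose_eq hWWt hWtW).mul_right hWE).add_right (Commute.one_right W)
  have hEF : Commute E (T * E + 1) :=
    (hTE.symm.mul_right (Commute.refl E)).add_right (Commute.one_right E)
  have hmid : 1 + Wᵀ * W - (1 - E⁻¹) = (T * E + 1) * E⁻¹ := by
    rw [hWtW, Matrix.add_mul, Matrix.one_mul, Matrix.mul_assoc, mul_nonsing_inv E hE,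
      Matrix.mul_one]
    abel
  have hM : W * (1 + Wᵀ * W - (1 - E⁻¹))⁻¹ * Wᵀ = E * (T * E + 1)⁻¹ * T := by
    rw [hmid, Matrix.mul_inv_rev, nonsing_inv_nonsing_inv E hE,
      (hWE.mul_right (commute_nonsing_inv_right hWF)).eq, Matrix.mul_assoc _ W, hWWt]
  rw [hM, eq_comm]
  apply inv_eq_right_inv
  calc (T * E + 1) * (1 - E * (T * E + 1)⁻¹ * T)
      = T * E + 1 - E * ((T * E + 1) * (T * E + 1)⁻¹) * T := by
        rw [Matrix.mul_sub, Matrix.mul_one, ← Matrix.mul_assoc, ← Matrix.mul_assoc, ← hEF.eq,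
          Matrix.mul_assoc E]
    _ = 1 := by rw [mul_nonsing_inv _ hF, Matrix.mul_one, hTE.eq, add_sub_cancel_left]

theorem one_sub_MrecGen_eq_inv_geom_sum (W : ℕ → Matrix ι ι ℝ) (T : Matrix ι ι ℝ) (d : ℕ)
    (hW : ∀ i, 1 ≤ i → i ≤ d → W i * (W i)ᵀ = T ∧ (W i)ᵀ * W i = T)
    (hE : ∀ ℓ ≤ d, IsUnit (∑ j ∈ range (ℓ + 1), T ^ j).det) :
    1 - MrecGen W d = (∑ j ∈ range (d + 1), T ^ j)⁻¹ := by
  induction d with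
  | zero => simp [MrecGen]
  | succ k ih =>
    obtain ⟨hWWt, hWtW⟩ := hW (k + 1) le_add_self le_rfl
    have hWT := commute_of_mul_transpose_eq hWWt hWtW
    have hM : MrecGen W k = 1 - (∑ j ∈ range (k + 1), T ^ j)⁻¹ := by
      rw [← ih (fun i hi hik ↦ hW i hi (hik.trans k.le_succ))
        (fun ℓ hℓ ↦ hE ℓ (hℓ.trans k.le_succ)), sub_sub_cancel]
    rw [MrecGen, hM, one_sub_mul_inv_mul_transpose hWWt hWtW
      (Commute.sum_right _ _ _ fun j _ ↦ hWT.pow_right j)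
      (Commute.sum_right _ _ _ fun j _ ↦ (Commute.refl T).pow_right j) (hE k k.le_succ)
      (by rw [← geom_sum_succ]; exact hE (k + 1) le_rfl), ← geom_sum_succ]

end Recursion

section RestrictionA1

variable {m n α : Type*} [Fintype m] [DecidableEq m] [Fintype n] [DecidableEq n] [CommRing α]

lemma fromBlocks_permMatrix_smul_one_mul_transpose (σ : Equiv.Perm m) (c : α) :
    fromBlocks (σ.permMatrix α) 0 0 (c • (1 : Matrix n n α)) *
      (fromBlocks (σ.permMatrix α) 0 0 (c • (1 : Matrix n n α)))ᵀ =
      diagonal (Sum.elim 1 fun _ ↦ c ^ 2) := by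
  simp [fromBlocks_transpose, fromBlocks_multiply, ← permMatrix_mul, ← fromBlocks_diagonal,
    smul_one_eq_diagonal, sq]

lemma transpose_mul_fromBlocks_permMatrix_smul_one (σ : Equiv.Perm m) (c : α) :
    (fromBlocks (σ.permMatrix α) 0 0 (c • (1 : Matrix n n α)))ᵀ *
      fromBlocks (σ.permMatrix α) 0 0 (c • (1 : Matrix n n α)) =
      diagonal (Sum.elim 1 fun _ ↦ c ^ 2) := by
  simp [fromBlocks_transpose, fromBlocks_multiply, ← permMatrix_mul, ← fromBlocks_diagonal,
    smul_one_eq_diagonal, sq]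

end RestrictionA1

theorem eigenvalues_inv_one_sub_Mrec_of_restrictionA1_general
    (r q d : ℕ) (c : ℝ)
    (R : ℕ → Equiv.Perm (Fin r))
    (W : ℕ → Matrix (Fin r ⊕ Fin q) (Fin r ⊕ Fin q) ℝ)
    (hW : ∀ i, 1 ≤ i → i ≤ d →
      W i = Matrix.fromBlocks ((R i).permMatrix ℝ) 0 0 (c • (1 : Matrix (Fin q) (Fin q) ℝ))) :
    ((1 - MrecGen W d)⁻¹).charpoly =
      (X - C ((d : ℝ) + 1)) ^ r * (X - C (1 + ∑ j ∈ Finset.Icc 1 d, c ^ (2 * j))) ^ q := by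
  set v : Fin r ⊕ Fin q → ℝ := Sum.elim 1 fun _ ↦ c ^ 2
  have hv : 0 ≤ v := fun i ↦ by cases i <;> simp [v, sq_nonneg]
  have hMd := one_sub_MrecGen_eq_inv_geom_sum W (diagonal v) d
    (fun i hi hid ↦ hW i hi hid ▸ ⟨fromBlocks_permMatrix_smul_one_mul_transpose (R i) c,
      transpose_mul_fromBlocks_permMatrix_smul_one (R i) c⟩)
    (fun ℓ _ ↦ isUnit_det_geom_sum_diagonal hv ℓ)
  rw [hMd, nonsing_inv_nonsing_inv _ (isUnit_det_geom_sum_diagonal hv d), geom_sum_diagonal,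
    charpoly_diagonal, Fintype.prod_sum_type]
  simp only [v, Sum.elim_inl, Sum.elim_inr, Pi.one_apply, one_pow, sum_const, card_range,
    nsmul_one, prod_const, card_univ, Fintype.card_fin, ← pow_mul]
  rw [sum_range_succ_eq_add_sum_Icc, mul_zero, pow_zero, Nat.cast_add_one]

/-- Under restriction A1, the eigenvalues of `(I_p - M_d)⁻¹` are `d + 1` with multiplicity
`r` and `1 + ∑_{j=1}^d c^{2j}` with multiplicity `p - r`, i.e. the characteristic
polynomial of `(I_p - M_d)⁻¹` is `(X - (d+1))^r (X - (1 + ∑_{j=1}^d c^{2j}))^{p-r}`. -/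
theorem eigenvalues_inv_one_sub_Mrec_of_restrictionA1
    (r q d : ℕ) (c : ℝ) (hc0 : 0 < c) (hc1 : c < 1)
    (R : ℕ → Equiv.Perm (Fin r))
    (W : ℕ → Matrix (Fin r ⊕ Fin q) (Fin r ⊕ Fin q) ℝ)
    (hW : ∀ i, 1 ≤ i → i ≤ d →
      W i = Matrix.fromBlocks ((R i).permMatrix ℝ) 0 0 (c • (1 : Matrix (Fin q) (Fin q) ℝ))) :
    ((1 - MrecGen W d)⁻¹).charpoly =
      (X - C ((d : ℝ) + 1)) ^ r * (X - C (1 + ∑ j ∈ Finset.Icc 1 d, c ^ (2 * j))) ^ q :=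
  eigenvalues_inv_one_sub_Mrec_of_restrictionA1_general r q d c R W hW
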